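/- arXiv:1411.1793 — 6 statements merged into one kernel-verified Lean document; each statement's English description precedes it below -/
import Mathlib

section
/- Every oriented simple lattice cycle is either counterclockwise oriented or clockwise oriented; that is, for every oriented simple lattice cycle γ, either wind(γ,p) ∈ {0,1} for every point p not in the image of γ, or wind(γ,p) ∈ {−1,0} for every such p. -/
open scoped Classical

/-- An oriented simple lattice cycle in the grid graph on `ℤ²`: a cyclic sequence
`v 0, v 1, …, v (n-1), v n = v 0` (encoded as an `n`-periodic function `ℕ → ℤ × ℤ`),
with `n ≥ 4`, vertices pairwise distinct within one period, and consecutive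
vertices at Euclidean distance `1`. -/
structure LatticeCycle where
  n : ℕ
  four_le : 4 ≤ n
  v : ℕ → ℤ × ℤ
  periodic : ∀ i, v (i + n) = v i
  inj : ∀ i j, i < n → j < n → v i = v j → i = j
  step : ∀ i, v (i + 1) - v i = (1, 0) ∨ v (i + 1) - v i = (-1, 0) ∨
    v (i + 1) - v i = (0, 1) ∨ v (i + 1) - v i = (0, -1)

/-- Inclusion of `ℤ²` into `ℝ²`. -/
def toR (v : ℤ × ℤ) : ℝ × ℝ := ((v.1 : ℝ), (v.2 : ℝ))

/-- The image of a lattice cycle: the union of the closed segments `[vᵢ, vᵢ₊₁] ⊆ ℝ²`. -/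
def LatticeCycle.image (γ : LatticeCycle) : Set (ℝ × ℝ) :=
  ⋃ i ∈ Finset.range γ.n, segment ℝ (toR (γ.v i)) (toR (γ.v (i + 1)))

/-- Signed crossing of the directed edge `u → w` with the rightward horizontal ray
from `p`: an edge from `(a,b)` to `(a,b+1)` contributes `+1`, and an edge from
`(a,b+1)` to `(a,b)` contributes `-1`, whenever `a > p₁` and `b ≤ p₂ < b + 1`. -/
noncomputable def vcross (u w : ℤ × ℤ) (p : ℝ × ℝ) : ℤ :=
  if w = (u.1, u.2 + 1) ∧ p.1 < (u.1 : ℝ) ∧ (u.2 : ℝ) ≤ p.2 ∧ p.2 < (u.2 : ℝ) + 1 then 1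
  else if u = (w.1, w.2 + 1) ∧ p.1 < (w.1 : ℝ) ∧ (w.2 : ℝ) ≤ p.2 ∧ p.2 < (w.2 : ℝ) + 1 then -1
  else 0

/-- The winding number of `γ` around `p`: the signed number of directed vertical
edges of `γ` crossing the rightward horizontal ray from `p`. -/
noncomputable def wind (γ : LatticeCycle) (p : ℝ × ℝ) : ℤ :=
  ∑ i ∈ Finset.range γ.n, vcross (γ.v i) (γ.v (i + 1)) p

/-- `γ` is counterclockwise oriented: `wind(γ,p) ∈ {0,1}` for every `p` off the image. -/
def LatticeCycle.ccw (γ : LatticeCycle) : Prop :=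
  ∀ p : ℝ × ℝ, p ∉ γ.image → wind γ p = 0 ∨ wind γ p = 1

/-- `γ` is clockwise oriented: `wind(γ,p) ∈ {-1,0}` for every `p` off the image. -/
def LatticeCycle.cw (γ : LatticeCycle) : Prop :=
  ∀ p : ℝ × ℝ, p ∉ γ.image → wind γ p = -1 ∨ wind γ p = 0

/-- The point `v + (k/2, l/2)`; for `k, l ∈ {-1, 1}` these are the four points of `N_v`. -/
noncomputable def corner (v : ℤ × ℤ) (k l : ℤ) : ℝ × ℝ :=
  ((v.1 : ℝ) + (k : ℝ) / 2, (v.2 : ℝ) + (l : ℝ) / 2)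

/-- The metric weight of `v` with respect to `γ`:
`(1/4) · Σ_{u ∈ N_v} wind(γ,u)`. -/
noncomputable def metricw (γ : LatticeCycle) (v : ℤ × ℤ) : ℚ :=
  ((wind γ (corner v (-1) (-1)) + wind γ (corner v (-1) 1) +
    wind γ (corner v 1 (-1)) + wind γ (corner v 1 1) : ℤ) : ℚ) / 4

/-- The set of values `{wind(γ,u) : u ∈ N_v}` (each distinct value counted once). -/
noncomputable def windSet (γ : LatticeCycle) (v : ℤ × ℤ) : Finset ℤ :=
  {wind γ (corner v (-1) (-1)), wind γ (corner v (-1) 1),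
   wind γ (corner v 1 (-1)), wind γ (corner v 1 1)}

/-- The topological weight of `v` with respect to `γ`: the arithmetic mean of the
set of values `{wind(γ,u) : u ∈ N_v}`, each distinct value counted once. -/
noncomputable def topw (γ : LatticeCycle) (v : ℤ × ℤ) : ℚ :=
  (∑ k ∈ windSet γ v, (k : ℚ)) / ((windSet γ v).card : ℚ)

/-- The angle of `γ` at the vertex of index `i`: with `d_in = vᵢ - vᵢ₋₁` and
`d_out = vᵢ₊₁ - vᵢ`, it is `0` if `d_out = d_in`, `1/4` if `d_out` is `d_in`
rotated by 90° counterclockwise, `-1/4` if rotated by 90° clockwise. -/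
noncomputable def angleAt (γ : LatticeCycle) (i : ℕ) : ℚ :=
  let din := γ.v (i + γ.n) - γ.v (i + γ.n - 1)
  let dout := γ.v (i + 1) - γ.v i
  if dout = din then 0
  else if dout = (-din.2, din.1) then 1/4
  else if dout = (din.2, -din.1) then -1/4
  else 0

/-- `v` is a vertex of `γ`. -/
def LatticeCycle.isVertex (γ : LatticeCycle) (v : ℤ × ℤ) : Prop :=
  ∃ i, i < γ.n ∧ γ.v i = v

/-- The angle of `γ` at a point `v ∈ ℤ²`: the angle at the (unique) index of `v`
if `v` is a vertex of `γ`, and `0` otherwise. -/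
noncomputable def angle (γ : LatticeCycle) (v : ℤ × ℤ) : ℚ :=
  if h : γ.isVertex v then angleAt γ h.choose else 0

/-- The color of a lattice point: `1` if `x + y` is odd, `-1` if `x + y` is even. -/
def col (v : ℤ × ℤ) : ℤ := if Even (v.1 + v.2) then -1 else 1

/-- The enclosed charge `charge_int(γ) = Σ_{v ∈ ℤ², v ∉ image γ} col(v)·wind(γ,v)`. -/
noncomputable def chargeInt (γ : LatticeCycle) : ℤ :=
  ∑ᶠ v : ℤ × ℤ, if toR v ∉ γ.image then col v * wind γ (toR v) else 0

/-- The boundary charge `charge_∂(γ) = Σ_{v vertex of γ} angle(γ,v)·col(v)`. -/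
noncomputable def chargeBd (γ : LatticeCycle) : ℚ :=
  ∑ i ∈ Finset.range γ.n, angle γ (γ.v i) * (col (γ.v i) : ℚ)

/-!
The winding number `wind γ p` only depends on the unit square `(⌊p₁⌋, ⌊p₂⌋)` containing `p`.
Crossing a side of a square changes it by the net number of traversals of that side by `γ`; for
horizontal sides this holds because the winding number can equally be counted along the upward
ray. As `γ` is simple, the squares around a vertex of `γ` are separated only by its two edges
there, so all squares on the left of `γ` share one winding number `K` and those on its right
have `K - 1`. Walking right from any square one meets a vertical edge of `γ` or leaves the
bounding box, where the winding number is `0`; hence every value lies in `{0, K, K - 1}`. Next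
to a rightmost vertical edge there is an outer square on the left or on the right, so
`K ∈ {0, 1}`.
-/

namespace LatticeCycle

/-- The square `c = (a, b)` stands for the points of `[a, a + 1) × [b, b + 1)`. -/
def rightCross (u w c : ℤ × ℤ) : ℤ :=
  if w = (u.1, u.2 + 1) ∧ c.1 < u.1 ∧ c.2 = u.2 then 1
  else if u = (w.1, w.2 + 1) ∧ c.1 < w.1 ∧ c.2 = w.2 then -1 else 0

def upCross (u w c : ℤ × ℤ) : ℤ :=
  if u = (w.1 + 1, w.2) ∧ c.1 = w.1 ∧ c.2 < w.2 then 1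
  else if w = (u.1 + 1, u.2) ∧ c.1 = u.1 ∧ c.2 < u.2 then -1 else 0

def quadrant (c u : ℤ × ℤ) : ℤ := if c.1 < u.1 ∧ c.2 < u.2 then 1 else 0

def IsUnitStep (d : ℤ × ℤ) : Prop := d = (1, 0) ∨ d = (-1, 0) ∨ d = (0, 1) ∨ d = (0, -1)

lemma vcross_eq_rightCross (u w : ℤ × ℤ) (p : ℝ × ℝ) :
    vcross u w p = rightCross u w (⌊p.1⌋, ⌊p.2⌋) := by
  simp only [vcross, rightCross, ← Int.floor_lt, ← Int.floor_eq_iff]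

lemma rightCross_sub_upCross {u w : ℤ × ℤ} (h : IsUnitStep (w - u)) (c : ℤ × ℤ) :
    rightCross u w c - upCross u w c = quadrant c w - quadrant c u := by
  obtain ⟨u1, u2⟩ := u; obtain ⟨w1, w2⟩ := w; obtain ⟨c1, c2⟩ := c
  simp only [IsUnitStep, Prod.mk_sub_mk, Prod.mk.injEq] at h
  simp only [rightCross, upCross, quadrant, Prod.mk.injEq]
  split_ifs <;> omega

lemma rightCross_sub_rightCross (u w : ℤ × ℤ) (a b : ℤ) :
    rightCross u w (a - 1, b) - rightCross u w (a, b) =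
      (if u = (a, b) ∧ w = (a, b + 1) then 1 else 0) -
        (if u = (a, b + 1) ∧ w = (a, b) then 1 else 0) := by
  obtain ⟨u1, u2⟩ := u; obtain ⟨w1, w2⟩ := w
  simp only [rightCross, Prod.mk.injEq]
  split_ifs <;> omega

lemma upCross_sub_upCross (u w : ℤ × ℤ) (a b : ℤ) :
    upCross u w (a, b - 1) - upCross u w (a, b) =
      (if u = (a + 1, b) ∧ w = (a, b) then 1 else 0) -
        (if u = (a, b) ∧ w = (a + 1, b) then 1 else 0) := by
  obtain ⟨u1, u2⟩ := u; obtain ⟨w1, w2⟩ := w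
  simp only [upCross, Prod.mk.injEq]
  split_ifs <;> omega

variable (γ : LatticeCycle)

def cellWind (c : ℤ × ℤ) : ℤ := ∑ i ∈ Finset.range γ.n, rightCross (γ.v i) (γ.v (i + 1)) c

def cellUpWind (c : ℤ × ℤ) : ℤ := ∑ i ∈ Finset.range γ.n, upCross (γ.v i) (γ.v (i + 1)) c

def edgeCount (u w : ℤ × ℤ) : ℤ :=
  ∑ i ∈ Finset.range γ.n, if γ.v i = u ∧ γ.v (i + 1) = w then 1 else 0

def netFlow (u w : ℤ × ℤ) : ℤ := γ.edgeCount u w - γ.edgeCount w u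

lemma wind_eq_cellWind (p : ℝ × ℝ) : wind γ p = γ.cellWind (⌊p.1⌋, ⌊p.2⌋) :=
  Finset.sum_congr rfl fun _ _ => vcross_eq_rightCross _ _ _

lemma netFlow_swap (u w : ℤ × ℤ) : γ.netFlow w u = -γ.netFlow u w :=
  (neg_sub _ _).symm

/-- The crossings of an edge with the rightward and the upward ray differ by the change of the
quadrant indicator, which telescopes along `γ`. -/
lemma cellWind_eq_cellUpWind (c : ℤ × ℤ) : γ.cellWind c = γ.cellUpWind c := by
  rw [← sub_eq_zero, cellWind, cellUpWind, ← Finset.sum_sub_distrib,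
    Finset.sum_congr rfl fun i _ => rightCross_sub_upCross (γ.step i) c,
    Finset.sum_range_sub (fun i => quadrant c (γ.v i)), ← zero_add γ.n, γ.periodic, sub_self]

lemma cellWind_sub_right (a b : ℤ) :
    γ.cellWind (a - 1, b) - γ.cellWind (a, b) = γ.netFlow (a, b) (a, b + 1) := by
  simp only [cellWind, netFlow, edgeCount, ← Finset.sum_sub_distrib, rightCross_sub_rightCross]

lemma cellWind_sub_up (a b : ℤ) :
    γ.cellWind (a, b) - γ.cellWind (a, b - 1) = γ.netFlow (a, b) (a + 1, b) := by
  rw [cellWind_eq_cellUpWind, cellWind_eq_cellUpWind, ← neg_sub, netFlow_swap]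
  simp only [cellUpWind, netFlow, edgeCount, ← Finset.sum_sub_distrib, upCross_sub_upCross]

def rot (d : ℤ × ℤ) : ℤ × ℤ := (-d.2, d.1)

/-- For a unit vector `d`, the square on the left of the edge `u → u + d`: its centre is
`u + (d + rot d) / 2`. -/
def leftCell (u d : ℤ × ℤ) : ℤ × ℤ := (u.1 + (d.1 - d.2 - 1) / 2, u.2 + (d.1 + d.2 - 1) / 2)

def rightCell (u d : ℤ × ℤ) : ℤ × ℤ := leftCell u (-rot d)

lemma rot_rot (d : ℤ × ℤ) : rot (rot d) = -d := rfl

lemma rightCell_rot (u d : ℤ × ℤ) : rightCell u (rot d) = leftCell u d := by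
  rw [rightCell, rot_rot, neg_neg]

lemma IsUnitStep.neg_ne {d : ℤ × ℤ} (hd : IsUnitStep d) : -d ≠ d := by
  rcases hd with rfl | rfl | rfl | rfl <;> decide

lemma IsUnitStep.rot_ne {d : ℤ × ℤ} (hd : IsUnitStep d) : LatticeCycle.rot d ≠ d := by
  rcases hd with rfl | rfl | rfl | rfl <;> decide

lemma IsUnitStep.rot_ne_neg {d : ℤ × ℤ} (hd : IsUnitStep d) : LatticeCycle.rot d ≠ -d := by
  rcases hd with rfl | rfl | rfl | rfl <;> decide

lemma IsUnitStep.rot {d : ℤ × ℤ} (hd : IsUnitStep d) : IsUnitStep (rot d) := by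
  rcases hd with rfl | rfl | rfl | rfl <;> simp [IsUnitStep, LatticeCycle.rot]

lemma IsUnitStep.eq_or_eq_rot_or_eq_neg_or_rot_eq {a b : ℤ × ℤ} (ha : IsUnitStep a)
    (hb : IsUnitStep b) : b = a ∨ b = LatticeCycle.rot a ∨ b = -a ∨ LatticeCycle.rot b = a := by
  rcases ha with rfl | rfl | rfl | rfl <;> rcases hb with rfl | rfl | rfl | rfl <;> decide

lemma leftCell_add_rot {d : ℤ × ℤ} (hd : IsUnitStep d) (u : ℤ × ℤ) :
    leftCell (u + d) (rot d) = leftCell u d := by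
  rcases hd with rfl | rfl | rfl | rfl <;> simp only [leftCell, rot, Prod.fst_add, Prod.snd_add,
    Prod.mk.injEq] <;> omega

lemma leftCell_up (u : ℤ × ℤ) : leftCell u (0, 1) = (u.1 - 1, u.2) := by
  simp [leftCell, sub_eq_add_neg]

lemma leftCell_down (u : ℤ × ℤ) : leftCell u (0, -1) = (u.1, u.2 - 1) := by
  simp [leftCell, sub_eq_add_neg]

lemma rightCell_up (u : ℤ × ℤ) : rightCell u (0, 1) = u := by
  simp [rightCell, leftCell, rot]

lemma rightCell_down (u : ℤ × ℤ) : rightCell u (0, -1) = (u.1 - 1, u.2 - 1) := by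
  simp [rightCell, leftCell, rot, sub_eq_add_neg]

lemma cellWind_leftCell {d : ℤ × ℤ} (hd : IsUnitStep d) (u : ℤ × ℤ) :
    γ.cellWind (leftCell u d) = γ.cellWind (rightCell u d) + γ.netFlow u (u + d) := by
  obtain ⟨a, b⟩ := u
  rcases hd with rfl | rfl | rfl | rfl <;>
    norm_num [leftCell, rightCell, rot, ← sub_eq_add_neg]
  · linarith [γ.cellWind_sub_up a b]
  · have := γ.cellWind_sub_up (a - 1) b
    rw [sub_add_cancel, netFlow_swap] at this
    linarith
  · linarith [γ.cellWind_sub_right a b]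
  · have := γ.cellWind_sub_right a (b - 1)
    rw [sub_add_cancel, netFlow_swap] at this
    linarith

lemma cellWind_leftCell_rot {d : ℤ × ℤ} (hd : IsUnitStep d) (u : ℤ × ℤ) :
    γ.cellWind (leftCell u (rot d)) = γ.cellWind (leftCell u d) + γ.netFlow u (u + rot d) := by
  rw [γ.cellWind_leftCell hd.rot, rightCell_rot]

/-- Going around `w` from one of the two squares to the other crosses no edge of `γ`. -/
lemma cellWind_leftCell_eq_of_turn {w a b : ℤ × ℤ} (ha : IsUnitStep a) (hb : IsUnitStep b)
    (hab : b ≠ -a) (hflow : ∀ e, e ≠ b → e ≠ -a → γ.netFlow w (w + e) = 0) :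
    γ.cellWind (leftCell w b) = γ.cellWind (leftCell w (rot a)) := by
  rcases ha.eq_or_eq_rot_or_eq_neg_or_rot_eq hb with h | h | h | h
  · subst h
    rw [γ.cellWind_leftCell_rot ha, hflow _ ha.rot_ne ha.rot_ne_neg, add_zero]
  · rw [h]
  · exact absurd h hab
  · subst h
    rw [γ.cellWind_leftCell_rot hb.rot, γ.cellWind_leftCell_rot hb, rot_rot,
      hflow _ hb.rot_ne hb.rot.neg_ne.symm, hflow _ hb.neg_ne (neg_inj.not.mpr hb.rot_ne.symm),
      add_zero, add_zero]

lemma periodic_v : Function.Periodic γ.v γ.n := γ.periodic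

lemma n_pos : 0 < γ.n := by have := γ.four_le; omega

lemma v_eq_v_iff (i j : ℕ) : γ.v i = γ.v j ↔ i % γ.n = j % γ.n := by
  refine ⟨fun h => γ.inj _ _ (Nat.mod_lt _ γ.n_pos) (Nat.mod_lt _ γ.n_pos) ?_, fun h => ?_⟩
  · rwa [γ.periodic_v.map_mod_nat, γ.periodic_v.map_mod_nat]
  · rw [← γ.periodic_v.map_mod_nat i, h, γ.periodic_v.map_mod_nat]

lemma v_succ_eq_v_succ_iff (i j : ℕ) : γ.v (i + 1) = γ.v (j + 1) ↔ γ.v i = γ.v j := by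
  rw [v_eq_v_iff, v_eq_v_iff]
  exact ⟨Nat.ModEq.add_right_cancel' 1, Nat.ModEq.add_right 1⟩

lemma v_add_two_ne (i : ℕ) : γ.v (i + 2) ≠ γ.v i := by
  rw [ne_eq, v_eq_v_iff]
  intro h
  have h2 : 2 % γ.n = 0 % γ.n := Nat.ModEq.add_left_cancel' i h
  rw [Nat.mod_eq_of_lt (by have := γ.four_le; omega), Nat.zero_mod] at h2
  omega

lemma sum_ite_v_eq (k : ℕ) {g : ℕ → ℤ} (hg : Function.Periodic g γ.n) :
    ∑ j ∈ Finset.range γ.n, (if γ.v j = γ.v k then g j else 0) = g k := by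
  have hcond : ∀ j ∈ Finset.range γ.n,
      (if γ.v j = γ.v k then g j else 0) = if j = k % γ.n then g j else 0 := fun j hj => by
    simp only [v_eq_v_iff, Nat.mod_eq_of_lt (Finset.mem_range.mp hj)]
  rw [Finset.sum_congr rfl hcond, Finset.sum_ite_eq',
    if_pos (Finset.mem_range.mpr (Nat.mod_lt _ γ.n_pos)), hg.map_mod_nat]

lemma edgeCount_v_left (k : ℕ) (w : ℤ × ℤ) :
    γ.edgeCount (γ.v k) w = if γ.v (k + 1) = w then 1 else 0 := by
  simp only [edgeCount, ite_and]
  exact γ.sum_ite_v_eq k fun j => by rw [Nat.add_right_comm, γ.periodic]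

lemma edgeCount_v_right (k : ℕ) (u : ℤ × ℤ) :
    γ.edgeCount u (γ.v (k + 1)) = if γ.v k = u then 1 else 0 := by
  simp only [edgeCount, v_succ_eq_v_succ_iff, and_comm (a := γ.v _ = u), ite_and]
  exact γ.sum_ite_v_eq k fun j => by rw [γ.periodic]

lemma netFlow_v_succ (i : ℕ) (w : ℤ × ℤ) :
    γ.netFlow (γ.v (i + 1)) w =
      (if γ.v (i + 2) = w then 1 else 0) - (if γ.v i = w then 1 else 0) := by
  rw [netFlow, edgeCount_v_left, edgeCount_v_right]

lemma netFlow_v (i : ℕ) : γ.netFlow (γ.v i) (γ.v (i + 1)) = 1 := by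
  rw [netFlow_swap, netFlow_v_succ, if_neg (γ.v_add_two_ne i), if_pos rfl]
  norm_num

lemma exists_edge_of_netFlow_ne_zero {u w : ℤ × ℤ} (h : γ.netFlow u w ≠ 0) :
    ∃ i, γ.v i = u ∧ γ.v (i + 1) = w ∨ γ.v i = w ∧ γ.v (i + 1) = u := by
  by_contra hno
  have edgeCount_eq_zero (a b : ℤ × ℤ) (hab : ∀ i, ¬(γ.v i = a ∧ γ.v (i + 1) = b)) :
      γ.edgeCount a b = 0 :=
    Finset.sum_eq_zero fun i _ => if_neg (hab i)
  rw [netFlow, edgeCount_eq_zero u w fun i hi => hno ⟨i, Or.inl hi⟩,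
    edgeCount_eq_zero w u fun i hi => hno ⟨i, Or.inr hi⟩, sub_zero] at h
  exact h rfl

def dir (i : ℕ) : ℤ × ℤ := γ.v (i + 1) - γ.v i

lemma v_succ (i : ℕ) : γ.v (i + 1) = γ.v i + γ.dir i := (add_sub_cancel _ _).symm

lemma periodic_dir : Function.Periodic γ.dir γ.n := fun i => by
  rw [dir, dir, Nat.add_right_comm, γ.periodic, γ.periodic]

lemma fst_v_succ (i : ℕ) : (γ.v (i + 1)).1 = (γ.v i).1 + (γ.dir i).1 := by
  rw [v_succ, Prod.fst_add]

lemma isUnitStep_dir (i : ℕ) : IsUnitStep (γ.dir i) := γ.step i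

lemma dir_succ_ne_neg (i : ℕ) : γ.dir (i + 1) ≠ -γ.dir i := by
  intro h
  apply γ.v_add_two_ne i
  rw [γ.v_succ (i + 1), h, γ.v_succ i, add_neg_cancel_right]

lemma netFlow_v_succ_add_eq_zero (i : ℕ) {e : ℤ × ℤ} (hout : e ≠ γ.dir (i + 1))
    (hin : e ≠ -γ.dir i) : γ.netFlow (γ.v (i + 1)) (γ.v (i + 1) + e) = 0 := by
  rw [netFlow_v_succ, if_neg, if_neg, sub_zero]
  · rw [γ.v_succ i, add_assoc, left_eq_add]
    exact fun h => hin (eq_neg_of_add_eq_zero_right h)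
  · rw [show i + 2 = i + 1 + 1 from rfl, γ.v_succ (i + 1), add_right_inj]
    exact hout.symm

lemma cellWind_leftCell_dir_succ (i : ℕ) :
    γ.cellWind (leftCell (γ.v (i + 1)) (γ.dir (i + 1))) =
      γ.cellWind (leftCell (γ.v i) (γ.dir i)) := by
  rw [← leftCell_add_rot (γ.isUnitStep_dir i), ← v_succ]
  exact γ.cellWind_leftCell_eq_of_turn (γ.isUnitStep_dir i) (γ.isUnitStep_dir (i + 1))
    (γ.dir_succ_ne_neg i) fun e hout hin => γ.netFlow_v_succ_add_eq_zero i hout hin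

def leftWind : ℤ := γ.cellWind (leftCell (γ.v 0) (γ.dir 0))

lemma cellWind_leftCell_dir (i : ℕ) : γ.cellWind (leftCell (γ.v i) (γ.dir i)) = γ.leftWind := by
  induction i with
  | zero => rfl
  | succ i ih => rw [cellWind_leftCell_dir_succ, ih]

lemma cellWind_rightCell_dir (i : ℕ) :
    γ.cellWind (rightCell (γ.v i) (γ.dir i)) = γ.leftWind - 1 := by
  have := γ.cellWind_leftCell (γ.isUnitStep_dir i) (γ.v i)
  rw [cellWind_leftCell_dir, ← v_succ, netFlow_v] at this
  omega

lemma exists_max_fst : ∃ j, ∀ i, (γ.v i).1 ≤ (γ.v j).1 := by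
  obtain ⟨j, -, hj⟩ := (Finset.range γ.n).exists_max_image (fun i => (γ.v i).1)
    (Finset.nonempty_range_iff.mpr γ.n_pos.ne')
  exact ⟨j, fun i => γ.periodic_v.map_mod_nat i ▸
    hj _ (Finset.mem_range.mpr (Nat.mod_lt _ γ.n_pos))⟩

lemma cellWind_eq_zero_of_forall_le {c : ℤ × ℤ} (h : ∀ i, (γ.v i).1 ≤ c.1) :
    γ.cellWind c = 0 := by
  refine Finset.sum_eq_zero fun i _ => ?_
  have := h i
  have := h (i + 1)
  rw [rightCross, if_neg (by omega), if_neg (by omega)]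

/-- Walking right from `c` one either meets a vertical edge of `γ`, whose left or right square is
the current one, or passes all vertices of `γ`. -/
lemma cellWind_mem (c : ℤ × ℤ) :
    γ.cellWind c = 0 ∨ γ.cellWind c = γ.leftWind ∨ γ.cellWind c = γ.leftWind - 1 := by
  obtain ⟨j, hj⟩ := γ.exists_max_fst
  obtain ⟨a, b⟩ := c
  induction hk : ((γ.v j).1 - a).toNat generalizing a with
  | zero => exact Or.inl (γ.cellWind_eq_zero_of_forall_le fun i => (hj i).trans (by omega))
  | succ k ih =>
    have hjump := γ.cellWind_sub_right (a + 1) b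
    rw [add_sub_cancel_right] at hjump
    by_cases hflow : γ.netFlow (a + 1, b) (a + 1, b + 1) = 0
    · rw [hflow, sub_eq_zero] at hjump
      rw [hjump]
      exact ih (a + 1) (by omega)
    obtain ⟨i, ⟨hu, hw⟩ | ⟨hu, hw⟩⟩ := γ.exists_edge_of_netFlow_ne_zero hflow
    · have hdir : γ.dir i = (0, 1) := by rw [dir, hu, hw]; simp
      have := γ.cellWind_leftCell_dir i
      rw [hdir, leftCell_up, hu, add_sub_cancel_right] at this
      exact Or.inr (Or.inl this)
    · have hdir : γ.dir i = (0, -1) := by rw [dir, hu, hw]; simp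
      have := γ.cellWind_rightCell_dir i
      rw [hdir, rightCell_down, hu, add_sub_cancel_right, add_sub_cancel_right] at this
      exact Or.inr (Or.inr this)

lemma exists_vertical_dir_of_max : ∃ i, (∀ k, (γ.v k).1 ≤ (γ.v i).1) ∧
    (γ.dir i = (0, 1) ∨ γ.dir i = (0, -1)) := by
  obtain ⟨j, hj⟩ := γ.exists_max_fst
  have hnext := γ.fst_v_succ j ▸ hj (j + 1)
  rcases γ.isUnitStep_dir j with h | h | h | h
  · rw [h] at hnext
    simp at hnext
  · obtain ⟨i, hi⟩ : ∃ i, i + 1 = j + γ.n := ⟨j + γ.n - 1, by have := γ.n_pos; omega⟩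
    have hprev : (γ.v (i + 1)).1 = (γ.v j).1 := by rw [hi, γ.periodic]
    rw [fst_v_succ] at hprev
    have hback := γ.dir_succ_ne_neg i
    rw [hi, γ.periodic_dir, h] at hback
    rcases γ.isUnitStep_dir i with h' | h' | h' | h'
    · exact absurd (by rw [h']; rfl) hback
    · rw [h'] at hprev
      dsimp only at hprev
      have := hj i
      omega
    · rw [h'] at hprev
      simp only [add_zero] at hprev
      exact ⟨i, fun k => hprev ▸ hj k, Or.inl h'⟩
    · rw [h'] at hprev
      simp only [add_zero] at hprev
      exact ⟨i, fun k => hprev ▸ hj k, Or.inr h'⟩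
  · exact ⟨j, hj, Or.inl h⟩
  · exact ⟨j, hj, Or.inr h⟩

/-- The squares next to a rightmost vertical edge, on its outer side, have winding number `0`. -/
lemma leftWind_eq_zero_or_one : γ.leftWind = 0 ∨ γ.leftWind = 1 := by
  obtain ⟨i, hmax, h | h⟩ := γ.exists_vertical_dir_of_max
  · have := γ.cellWind_rightCell_dir i
    rw [h, rightCell_up, γ.cellWind_eq_zero_of_forall_le hmax] at this
    omega
  · have := γ.cellWind_leftCell_dir i
    rw [h, leftCell_down, γ.cellWind_eq_zero_of_forall_le (c := (_, (γ.v i).2 - 1)) hmax] at this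
    omega

end LatticeCycle

/-- Every oriented simple lattice cycle is either counterclockwise
oriented or clockwise oriented. -/
theorem every_lattice_cycle_ccw_or_cw (γ : LatticeCycle) : γ.ccw ∨ γ.cw := by
  have hwind (p : ℝ × ℝ) :
      wind γ p = 0 ∨ wind γ p = γ.leftWind ∨ wind γ p = γ.leftWind - 1 := by
    rw [γ.wind_eq_cellWind]
    exact γ.cellWind_mem _
  rcases γ.leftWind_eq_zero_or_one with h | h
  · exact Or.inr fun p _ => by have := hwind p; omega
  · exact Or.inl fun p _ => by have := hwind p; omega
end

section
/- Let γ be an oriented simple lattice cycle and let p ∈ ℝ² be a point not in the image of γ. Then the signed number of directed vertical edges of γ crossing the rightward horizontal ray from p equals the signed number of directed horizontal edges of γ crossing the upward vertical ray from p; that is, wind(γ,p) equals the count in which an edge from (a+1,b) to (a,b) contributes +1 and an edge from (a,b) to (a+1,b) contributes −1 whenever b > p₂ and a ≤ p₁ < a+1, where p = (p₁,p₂). In other words, the winding number can be computed by counting signed crossings with a ray in any coordinate direction. -/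
open scoped Classical

/-- Signed crossing of the directed edge `u → w` with the upward vertical ray
from `p`: an edge from `(a+1,b)` to `(a,b)` contributes `+1`, and an edge from
`(a,b)` to `(a+1,b)` contributes `-1`, whenever `b > p₂` and `a ≤ p₁ < a + 1`. -/
noncomputable def hcross (u w : ℤ × ℤ) (p : ℝ × ℝ) : ℤ :=
  if u = (w.1 + 1, w.2) ∧ p.2 < (w.2 : ℝ) ∧ (w.1 : ℝ) ≤ p.1 ∧ p.1 < (w.1 : ℝ) + 1 then 1
  else if w = (u.1 + 1, u.2) ∧ p.2 < (u.2 : ℝ) ∧ (u.1 : ℝ) ≤ p.1 ∧ p.1 < (u.1 : ℝ) + 1 then -1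
  else 0

/-- The signed number of directed horizontal edges of `γ` crossing the upward
vertical ray from `p`. -/
noncomputable def hwind (γ : LatticeCycle) (p : ℝ × ℝ) : ℤ :=
  ∑ i ∈ Finset.range γ.n, hcross (γ.v i) (γ.v (i + 1)) p

/-!
Let `Q_p(v) = quadrantIndicator p v` indicate that the lattice point `v` lies strictly north-east
of `p`. Along a unit step `u → w`, `Q_p` changes exactly when the step crosses one of the two rays
from `p`: an upward step from `(a, b)` raises `Q_p` iff `a > p₁` and `b ≤ p₂ < b + 1`, a rightward
step iff `b > p₂` and `a ≤ p₁ < a + 1`. Hence `vcross - hcross = Q_p(w) - Q_p(u)` on every step,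
and summing along a closed path telescopes to `0`.
-/

noncomputable def quadrantIndicator (p : ℝ × ℝ) (v : ℤ × ℤ) : ℤ :=
  if p.1 < (v.1 : ℝ) ∧ p.2 < (v.2 : ℝ) then 1 else 0

lemma vcross_swap (u w : ℤ × ℤ) (p : ℝ × ℝ) : vcross w u p = -vcross u w p := by
  obtain ⟨a, b⟩ := u
  obtain ⟨c, d⟩ := w
  simp only [vcross, Prod.mk.injEq]
  split_ifs <;> omega

lemma hcross_swap (u w : ℤ × ℤ) (p : ℝ × ℝ) : hcross w u p = -hcross u w p := by
  obtain ⟨a, b⟩ := u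
  obtain ⟨c, d⟩ := w
  simp only [hcross, Prod.mk.injEq]
  split_ifs <;> omega

lemma vcross_sub_hcross_up (a b : ℤ) (p : ℝ × ℝ) :
    vcross (a, b) (a, b + 1) p - hcross (a, b) (a, b + 1) p =
      quadrantIndicator p (a, b + 1) - quadrantIndicator p (a, b) := by
  simp only [vcross, hcross, quadrantIndicator, Prod.mk.injEq]
  push_cast
  split_ifs <;> grind

lemma vcross_sub_hcross_right (a b : ℤ) (p : ℝ × ℝ) :
    vcross (a, b) (a + 1, b) p - hcross (a, b) (a + 1, b) p =
      quadrantIndicator p (a + 1, b) - quadrantIndicator p (a, b) := by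
  simp only [vcross, hcross, quadrantIndicator, Prod.mk.injEq]
  push_cast
  split_ifs <;> grind

lemma vcross_sub_hcross_of_step (p : ℝ × ℝ) {u w : ℤ × ℤ}
    (h : w - u = (1, 0) ∨ w - u = (-1, 0) ∨ w - u = (0, 1) ∨ w - u = (0, -1)) :
    vcross u w p - hcross u w p = quadrantIndicator p w - quadrantIndicator p u := by
  obtain ⟨a, b⟩ := u
  obtain ⟨c, d⟩ := w
  simp only [Prod.mk_sub_mk, Prod.mk.injEq] at h
  rcases h with ⟨hc, hd⟩ | ⟨hc, hd⟩ | ⟨hc, hd⟩ | ⟨hc, hd⟩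
  · obtain ⟨rfl, rfl⟩ : c = a + 1 ∧ b = d := by omega
    exact vcross_sub_hcross_right a b p
  · obtain ⟨rfl, rfl⟩ : a = c + 1 ∧ d = b := by omega
    rw [vcross_swap, hcross_swap]
    linarith [vcross_sub_hcross_right c d p]
  · obtain ⟨rfl, rfl⟩ : a = c ∧ d = b + 1 := by omega
    exact vcross_sub_hcross_up a b p
  · obtain ⟨rfl, rfl⟩ : c = a ∧ b = d + 1 := by omega
    rw [vcross_swap, hcross_swap]
    linarith [vcross_sub_hcross_up c d p]

theorem sum_vcross_eq_sum_hcross_of_closed (p : ℝ × ℝ) (v : ℕ → ℤ × ℤ) (n : ℕ)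
    (hstep : ∀ i < n, v (i + 1) - v i = (1, 0) ∨ v (i + 1) - v i = (-1, 0) ∨
      v (i + 1) - v i = (0, 1) ∨ v (i + 1) - v i = (0, -1))
    (hclosed : v n = v 0) :
    ∑ i ∈ Finset.range n, vcross (v i) (v (i + 1)) p =
      ∑ i ∈ Finset.range n, hcross (v i) (v (i + 1)) p := by
  rw [← sub_eq_zero, ← Finset.sum_sub_distrib]
  calc ∑ i ∈ Finset.range n, (vcross (v i) (v (i + 1)) p - hcross (v i) (v (i + 1)) p)
      = ∑ i ∈ Finset.range n,
          (quadrantIndicator p (v (i + 1)) - quadrantIndicator p (v i)) :=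
        Finset.sum_congr rfl fun i hi =>
          vcross_sub_hcross_of_step p (hstep i (Finset.mem_range.mp hi))
    _ = 0 := by rw [Finset.sum_range_sub (fun i => quadrantIndicator p (v i)), hclosed, sub_self]

theorem wind_eq_hwind_general (γ : LatticeCycle) (p : ℝ × ℝ) :
    wind γ p = hwind γ p :=
  sum_vcross_eq_sum_hcross_of_closed p γ.v γ.n (fun i _ => γ.step i)
    (by simpa using γ.periodic 0)

/-- For `p` not in the image of `γ`, the signed number of vertical
edges crossing the rightward horizontal ray from `p` equals the signed number of
horizontal edges crossing the upward vertical ray from `p`. -/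
theorem wind_eq_hwind (γ : LatticeCycle) (p : ℝ × ℝ) (hp : p ∉ γ.image) :
    wind γ p = hwind γ p :=
  wind_eq_hwind_general γ p
end

section
/- Let γ be an oriented simple lattice cycle and let v ∈ ℤ² be a lattice point not in the image of γ. Then wind(γ,u) = wind(γ,v) for all four points u ∈ N_v; consequently metricw(γ,v) = topw(γ,v) = wind(γ,v). -/
open scoped Classical

/-! The crossing count of `vcross` depends on `p` only through `⌊p.1⌋` and `⌊p.2⌋`, and at a
lattice point `v = (x, y)` off the cycle the four points of `N_v` have floors in
`{x - 1, x} × {y - 1, y}`. Moving the start of the ray by one column across `v` changes nothing,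
since the only vertical edge gained or lost starts at `v`. Moving the ray one row down changes
the crossing of each edge by the jump along it of the indicator of `{(c, y) : c ≥ a}`, except for
the horizontal edge from `(a - 1, y)` to `(a, y)`, which passes through `v`; around a closed cycle
these jumps telescope to zero. -/

/-- Signed crossing of the edge `u → w` with the ray `{(c, b + 1/2) : c ≥ a}`. -/
def vcrossInt (u w : ℤ × ℤ) (a b : ℤ) : ℤ :=
  if w = (u.1, u.2 + 1) ∧ a ≤ u.1 ∧ u.2 = b then 1
  else if u = (w.1, w.2 + 1) ∧ a ≤ w.1 ∧ w.2 = b then -1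
  else 0

def windInt (γ : LatticeCycle) (a b : ℤ) : ℤ :=
  ∑ i ∈ Finset.range γ.n, vcrossInt (γ.v i) (γ.v (i + 1)) a b

lemma vcross_eq_vcrossInt_floor (u w : ℤ × ℤ) (p : ℝ × ℝ) :
    vcross u w p = vcrossInt u w (⌊p.1⌋ + 1) ⌊p.2⌋ := by
  have key : ∀ a b : ℤ, (p.1 < a ∧ (b : ℝ) ≤ p.2 ∧ p.2 < b + 1) ↔ (⌊p.1⌋ + 1 ≤ a ∧ b = ⌊p.2⌋) := by
    intro a b
    rw [Int.add_one_le_iff, Int.floor_lt, eq_comm, Int.floor_eq_iff]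
  simp only [vcross, vcrossInt, key, eq_comm (b := ⌊p.2⌋)]

lemma wind_eq_windInt_floor (γ : LatticeCycle) (p : ℝ × ℝ) :
    wind γ p = windInt γ (⌊p.1⌋ + 1) ⌊p.2⌋ := by
  simp only [wind, windInt, vcross_eq_vcrossInt_floor]

lemma floor_intCast_add_half (x k : ℤ) (hk : k = -1 ∨ k = 1) :
    ⌊(x : ℝ) + (k : ℝ) / 2⌋ = x - 1 ∨ ⌊(x : ℝ) + (k : ℝ) / 2⌋ = x := by
  rcases hk with rfl | rfl <;> [left; right] <;> rw [Int.floor_eq_iff] <;> push_cast <;>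
    constructor <;> linarith

lemma vcrossInt_col_add_one {u w : ℤ × ℤ} {x y : ℤ} (hu : u ≠ (x, y)) (hw : w ≠ (x, y)) :
    vcrossInt u w (x + 1) y = vcrossInt u w x y := by
  obtain ⟨a, b⟩ := u
  obtain ⟨c, d⟩ := w
  simp only [vcrossInt, ne_eq, Prod.mk.injEq] at hu hw ⊢
  split_ifs <;> omega

lemma vcrossInt_row_sub_one_sub {u w : ℤ × ℤ} {x y a : ℤ}
    (hstep : w - u = (1, 0) ∨ w - u = (-1, 0) ∨ w - u = (0, 1) ∨ w - u = (0, -1))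
    (hu : u ≠ (x, y)) (hw : w ≠ (x, y)) (ha : a = x ∨ a = x + 1) :
    vcrossInt u w a (y - 1) - vcrossInt u w a y =
      (if w.2 = y ∧ a ≤ w.1 then 1 else 0) - (if u.2 = y ∧ a ≤ u.1 then 1 else 0) := by
  obtain ⟨u₁, u₂⟩ := u
  obtain ⟨w₁, w₂⟩ := w
  simp only [Prod.mk_sub_mk, Prod.mk.injEq] at hstep
  rcases hstep with ⟨h₁, h₂⟩ | ⟨h₁, h₂⟩ | ⟨h₁, h₂⟩ | ⟨h₁, h₂⟩ <;>
    [(obtain ⟨rfl, rfl⟩ : w₁ = u₁ + 1 ∧ w₂ = u₂ := by omega);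
     (obtain ⟨rfl, rfl⟩ : w₁ = u₁ - 1 ∧ w₂ = u₂ := by omega);
     (obtain ⟨rfl, rfl⟩ : w₁ = u₁ ∧ w₂ = u₂ + 1 := by omega);
     (obtain ⟨rfl, rfl⟩ : w₁ = u₁ ∧ w₂ = u₂ - 1 := by omega)] <;>
  simp only [vcrossInt, ne_eq, Prod.mk.injEq, true_and] at hu hw ⊢ <;>
  split_ifs <;> omega

namespace LatticeCycle

variable (γ : LatticeCycle)

lemma sum_range_sub_eq_zero {M : Type*} [AddCommGroup M] (f : ℤ × ℤ → M) :
    ∑ i ∈ Finset.range γ.n, (f (γ.v (i + 1)) - f (γ.v i)) = 0 := by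
  rw [Finset.sum_range_sub (fun i => f (γ.v i)), ← zero_add γ.n, γ.periodic, sub_self]

lemma ne_of_toR_not_mem_image {p : ℤ × ℤ} (hp : toR p ∉ γ.image) {i : ℕ} (hi : i < γ.n) :
    γ.v i ≠ p ∧ γ.v (i + 1) ≠ p := by
  have hseg : segment ℝ (toR (γ.v i)) (toR (γ.v (i + 1))) ⊆ γ.image :=
    Set.subset_biUnion_of_mem (u := fun j => segment ℝ (toR (γ.v j)) (toR (γ.v (j + 1))))
      (Finset.mem_coe.2 (Finset.mem_range.2 hi))
  constructor <;> rintro rfl <;> apply hp <;> apply hseg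
  exacts [left_mem_segment _ _ _, right_mem_segment _ _ _]

variable {γ}

lemma windInt_col_add_one {x y : ℤ} (hv : toR (x, y) ∉ γ.image) :
    windInt γ (x + 1) y = windInt γ x y := by
  refine Finset.sum_congr rfl fun i hi => ?_
  obtain ⟨hu, hw⟩ := γ.ne_of_toR_not_mem_image hv (Finset.mem_range.1 hi)
  exact vcrossInt_col_add_one hu hw

lemma windInt_row_sub_one {x y a : ℤ} (hv : toR (x, y) ∉ γ.image) (ha : a = x ∨ a = x + 1) :
    windInt γ a (y - 1) = windInt γ a y := by
  rw [← sub_eq_zero, windInt, windInt, ← Finset.sum_sub_distrib,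
    ← γ.sum_range_sub_eq_zero fun u => if u.2 = y ∧ a ≤ u.1 then (1 : ℤ) else 0]
  refine Finset.sum_congr rfl fun i hi => ?_
  obtain ⟨hu, hw⟩ := γ.ne_of_toR_not_mem_image hv (Finset.mem_range.1 hi)
  exact vcrossInt_row_sub_one_sub (γ.step i) hu hw ha

lemma windInt_eq_of_toR_not_mem_image {x y a b : ℤ} (hv : toR (x, y) ∉ γ.image)
    (ha : a = x ∨ a = x + 1) (hb : b = y - 1 ∨ b = y) :
    windInt γ a b = windInt γ (x + 1) y := by
  have hrow : windInt γ a b = windInt γ a y := by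
    rcases hb with rfl | rfl
    exacts [windInt_row_sub_one hv ha, rfl]
  rw [hrow]
  rcases ha with rfl | rfl
  exacts [(windInt_col_add_one hv).symm, rfl]

end LatticeCycle

/-- If `v ∈ ℤ²` is not in the image of `γ`, then all four points of
`N_v` have the same winding number as `v`; consequently
`metricw(γ,v) = topw(γ,v) = wind(γ,v)`. -/
theorem wind_corner_eq_of_not_mem (γ : LatticeCycle) (v : ℤ × ℤ)
    (hv : toR v ∉ γ.image) :
    (∀ k l : ℤ, (k = -1 ∨ k = 1) → (l = -1 ∨ l = 1) →
      wind γ (corner v k l) = wind γ (toR v)) ∧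
    metricw γ v = (wind γ (toR v) : ℚ) ∧ topw γ v = (wind γ (toR v) : ℚ) := by
  obtain ⟨x, y⟩ := v
  have hcorner : ∀ k l : ℤ, (k = -1 ∨ k = 1) → (l = -1 ∨ l = 1) →
      wind γ (corner (x, y) k l) = wind γ (toR (x, y)) := by
    intro k l hk hl
    rw [wind_eq_windInt_floor, wind_eq_windInt_floor]
    simp only [corner, toR, Int.floor_intCast]
    refine LatticeCycle.windInt_eq_of_toR_not_mem_image hv ?_ (floor_intCast_add_half y l hl)
    rcases floor_intCast_add_half x k hk with h | h <;> rw [h] <;> omega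
  have h₁ := hcorner (-1) (-1) (.inl rfl) (.inl rfl)
  have h₂ := hcorner (-1) 1 (.inl rfl) (.inr rfl)
  have h₃ := hcorner 1 (-1) (.inr rfl) (.inl rfl)
  have h₄ := hcorner 1 1 (.inr rfl) (.inr rfl)
  refine ⟨hcorner, ?_, ?_⟩
  · rw [metricw, h₁, h₂, h₃, h₄]
    push_cast
    ring
  · have hset : windSet γ (x, y) = {wind γ (toR (x, y))} := by
      simp [windSet, h₁, h₂, h₃, h₄]
    simp [topw, hset]
end

section
/- Let γ be an oriented simple lattice cycle and let v be a vertex of γ at which γ goes straight, i.e. angle(γ,v) = 0. Then there exists k ∈ ℤ such that exactly two of the four points of N_v have winding number k and the other two have winding number k+1; consequently metricw(γ,v) = topw(γ,v) = k + 1/2, and in particular topw(γ,v) − metricw(γ,v) = 0. -/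
open scoped Classical

/-!
Compare the rightward rays from two neighbouring points `p`, `q` of `N_v`: an edge of `γ`
crosses one ray but not the other only if it meets the region swept between them. For the two
points of a row this is a unit segment met only by the vertical edge at `v`. For the two left
points it is a half-strip whose lattice points form the ray `{(a, v₂) : a ≥ v₁}`; an edge away
from `v` crosses exactly one of the two rays precisely when it enters or leaves that ray, and
these contributions telescope to zero around the cycle. Hence all differences of winding numbers
across `N_v` come from the two edges `v - d → v → v + d`: both rows differ by `d₂` and the left
column by `-d₁`, which for a unit vector `d` forces the values `k, k, k + 1, k + 1`.
-/

def IsGridStep (d : ℤ × ℤ) : Prop := d = (1, 0) ∨ d = (-1, 0) ∨ d = (0, 1) ∨ d = (0, -1)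

noncomputable def crossDefect (p q : ℝ × ℝ) (F : ℤ × ℤ → ℤ) (u w : ℤ × ℤ) : ℤ :=
  vcross u w p - vcross u w q - (F w - F u)

namespace LatticeCycle

variable (γ : LatticeCycle)

lemma v_eq_v_iff_s3 (a b : ℕ) : γ.v a = γ.v b ↔ a ≡ b [MOD γ.n] := by
  rw [← γ.periodic_v.map_mod_nat a, ← γ.periodic_v.map_mod_nat b]
  exact ⟨γ.inj _ _ (Nat.mod_lt a γ.n_pos) (Nat.mod_lt b γ.n_pos), congrArg γ.v⟩

lemma v_add_n_sub_one_add_one (i : ℕ) : γ.v (i + γ.n - 1 + 1) = γ.v i := by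
  rw [Nat.sub_add_cancel (by linarith [γ.n_pos]), γ.periodic]

lemma v_ne_of_not_modEq {i j : ℕ} (hi : ¬ j ≡ i [MOD γ.n]) (hp : ¬ j ≡ i + γ.n - 1 [MOD γ.n]) :
    γ.v j ≠ γ.v i ∧ γ.v (j + 1) ≠ γ.v i := by
  refine ⟨fun h => hi ((γ.v_eq_v_iff_s3 _ _).1 h), fun h => hp ?_⟩
  rw [← γ.v_add_n_sub_one_add_one i, v_eq_v_iff_s3] at h
  exact Nat.ModEq.add_right_cancel' 1 h

lemma sum_range_eq_add_of_periodic {M : Type*} [AddCommMonoid M] (i : ℕ) (f : ℕ → M)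
    (hf : Function.Periodic f γ.n)
    (h : ∀ j, ¬ j ≡ i [MOD γ.n] → ¬ j ≡ i + γ.n - 1 [MOD γ.n] → f j = 0) :
    ∑ j ∈ Finset.range γ.n, f j = f (i + γ.n - 1) + f i := by
  rw [← hf.map_mod_nat (i + γ.n - 1), ← hf.map_mod_nat i]
  refine Finset.sum_eq_add_of_mem _ _ (Finset.mem_range.2 (Nat.mod_lt _ γ.n_pos))
    (Finset.mem_range.2 (Nat.mod_lt _ γ.n_pos)) ?_ fun j hj hji => h j ?_ ?_
  · intro hmod
    have h1 : γ.n - 1 ≡ 0 [MOD γ.n] := Nat.ModEq.add_left_cancel' i (by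
      rw [← Nat.add_sub_assoc γ.n_pos]; exact hmod)
    rw [Nat.ModEq, Nat.mod_eq_of_lt (Nat.sub_lt γ.n_pos one_pos), Nat.zero_mod] at h1
    have := γ.four_le; omega
  · exact fun hmod => hji.2 ((Nat.mod_eq_of_lt (Finset.mem_range.1 hj)).symm.trans hmod)
  · exact fun hmod => hji.1 ((Nat.mod_eq_of_lt (Finset.mem_range.1 hj)).symm.trans hmod)

lemma wind_sub_wind_eq_sum_crossDefect (p q : ℝ × ℝ) (F : ℤ × ℤ → ℤ) :
    wind γ p - wind γ q = ∑ j ∈ Finset.range γ.n, crossDefect p q F (γ.v j) (γ.v (j + 1)) := by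
  have htelescope : ∑ j ∈ Finset.range γ.n, (F (γ.v (j + 1)) - F (γ.v j)) = 0 := by
    rw [Finset.sum_range_sub (fun j => F (γ.v j)), ← zero_add γ.n, γ.periodic, sub_self]
  simp only [wind, crossDefect, Finset.sum_sub_distrib, htelescope, sub_zero]

lemma wind_sub_wind_eq_crossDefect_add (i : ℕ) (p q : ℝ × ℝ) (F : ℤ × ℤ → ℤ)
    (hF : ∀ u w, IsGridStep (w - u) → u ≠ γ.v i → w ≠ γ.v i → crossDefect p q F u w = 0) :
    wind γ p - wind γ q =
      crossDefect p q F (γ.v (i + γ.n - 1)) (γ.v i) + crossDefect p q F (γ.v i) (γ.v (i + 1)) := by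
  rw [wind_sub_wind_eq_sum_crossDefect, sum_range_eq_add_of_periodic γ i, v_add_n_sub_one_add_one]
  · intro j
    simp only [add_right_comm j γ.n 1, γ.periodic]
  · intro j hi hp
    obtain ⟨hj, hj1⟩ := γ.v_ne_of_not_modEq hi hp
    exact hF _ _ (γ.step j) hj hj1

end LatticeCycle

lemma intCast_add_half_lt_iff (x k a : ℤ) : (x : ℝ) + k / 2 < a ↔ 2 * x + k < 2 * a := by
  rw [← Int.cast_lt (R := ℝ)]; push_cast; constructor <;> intro h <;> linarith

lemma intCast_le_add_half_iff (b y l : ℤ) : (b : ℝ) ≤ y + l / 2 ↔ 2 * b ≤ 2 * y + l := by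
  rw [← Int.cast_le (R := ℝ)]; push_cast; constructor <;> intro h <;> linarith

lemma vcross_corner (v u w : ℤ × ℤ) (k l : ℤ) (hl : l = -1 ∨ l = 1) :
    vcross u w (corner v k l) =
      if w = (u.1, u.2 + 1) ∧ v.1 * 2 + k < u.1 * 2 ∧ u.2 * 2 = v.2 * 2 + l - 1 then 1
      else if u = (w.1, w.2 + 1) ∧ v.1 * 2 + k < w.1 * 2 ∧ w.2 * 2 = v.2 * 2 + l - 1 then -1
      else 0 := by
  have key : ∀ z : ℤ × ℤ,
      ((corner v k l).1 < z.1 ∧ (z.2 : ℝ) ≤ (corner v k l).2 ∧ (corner v k l).2 < z.2 + 1)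
        ↔ (v.1 * 2 + k < z.1 * 2 ∧ z.2 * 2 = v.2 * 2 + l - 1) := by
    intro z
    rw [corner, intCast_add_half_lt_iff, intCast_le_add_half_iff,
      show (z.2 : ℝ) + 1 = ((z.2 + 1 : ℤ) : ℝ) by push_cast; rfl, intCast_add_half_lt_iff]
    omega
  simp only [vcross, key]

def rowRay (v u : ℤ × ℤ) : ℤ := if u.2 = v.2 ∧ v.1 ≤ u.1 then 1 else 0

section CornerDefects

variable {v u w : ℤ × ℤ} {l : ℤ}

lemma crossDefect_corner_row_eq_zero (hl : l = -1 ∨ l = 1) (hstep : IsGridStep (w - u))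
    (hu : u ≠ v) (hw : w ≠ v) : crossDefect (corner v (-1) l) (corner v 1 l) 0 u w = 0 := by
  obtain ⟨a, b⟩ := u; obtain ⟨c, d⟩ := w; obtain ⟨x, y⟩ := v
  simp only [crossDefect, vcross_corner _ _ _ _ _ hl, Pi.zero_apply]
  simp only [IsGridStep, ne_eq, Prod.mk_sub_mk, Prod.mk.injEq] at hstep hu hw ⊢
  split_ifs <;> omega

lemma crossDefect_corner_column_eq_zero (hstep : IsGridStep (w - u)) (hu : u ≠ v) (hw : w ≠ v) :
    crossDefect (corner v (-1) (-1)) (corner v (-1) 1) (rowRay v) u w = 0 := by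
  obtain ⟨a, b⟩ := u; obtain ⟨c, d⟩ := w; obtain ⟨x, y⟩ := v
  simp only [crossDefect, vcross_corner _ _ _ _ _ (Or.inl rfl),
    vcross_corner _ _ _ _ _ (Or.inr rfl), rowRay]
  simp only [IsGridStep, ne_eq, Prod.mk_sub_mk, Prod.mk.injEq] at hstep hu hw ⊢
  split_ifs <;> omega

end CornerDefects

section StraightDefects

variable {v d : ℤ × ℤ} {l : ℤ}

lemma crossDefect_corner_row_straight (hl : l = -1 ∨ l = 1) (hd : IsGridStep d) :
    crossDefect (corner v (-1) l) (corner v 1 l) 0 (v - d) v +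
      crossDefect (corner v (-1) l) (corner v 1 l) 0 v (v + d) = d.2 := by
  obtain ⟨x, y⟩ := v
  simp only [crossDefect, vcross_corner _ _ _ _ _ hl, Pi.zero_apply]
  rcases hd with rfl | rfl | rfl | rfl <;> rcases hl with rfl | rfl <;>
    norm_num <;> (try split_ifs) <;> omega

lemma crossDefect_corner_column_straight (hd : IsGridStep d) :
    crossDefect (corner v (-1) (-1)) (corner v (-1) 1) (rowRay v) (v - d) v +
      crossDefect (corner v (-1) (-1)) (corner v (-1) 1) (rowRay v) v (v + d) = -d.1 := by
  obtain ⟨x, y⟩ := v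
  simp only [crossDefect, vcross_corner _ _ _ _ _ (Or.inl rfl),
    vcross_corner _ _ _ _ _ (Or.inr rfl), rowRay]
  rcases hd with rfl | rfl | rfl | rfl <;> norm_num <;> (try split_ifs) <;> omega

end StraightDefects

lemma exists_multiset_eq_of_gridStep {a b c e : ℤ} {d : ℤ × ℤ} (hd : IsGridStep d)
    (hac : a - c = d.2) (hbe : b - e = d.2) (hab : a - b = -d.1) :
    ∃ k : ℤ, ({a, b, c, e} : Multiset ℤ) = {k, k, k + 1, k + 1} := by
  refine ⟨min (min a b) (min c e), Multiset.ext.2 fun m => ?_⟩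
  simp only [Multiset.insert_eq_cons, Multiset.count_cons, Multiset.count_singleton]
  rcases hd with rfl | rfl | rfl | rfl <;> dsimp only at hac hbe hab <;> split_ifs <;> omega

noncomputable def windMultiset (γ : LatticeCycle) (v : ℤ × ℤ) : Multiset ℤ :=
  {wind γ (corner v (-1) (-1)), wind γ (corner v (-1) 1), wind γ (corner v 1 (-1)),
    wind γ (corner v 1 1)}

section Weights

variable {γ : LatticeCycle} {v : ℤ × ℤ} {k : ℤ}

lemma metricw_eq_sum_windMultiset : metricw γ v = ((windMultiset γ v).sum : ℚ) / 4 := by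
  simp only [metricw, windMultiset, Multiset.insert_eq_cons, Multiset.sum_cons,
    Multiset.sum_singleton, add_assoc]

lemma windSet_eq_toFinset_windMultiset : windSet γ v = (windMultiset γ v).toFinset := by
  simp only [windSet, windMultiset, Multiset.insert_eq_cons, Multiset.toFinset_cons,
    Multiset.toFinset_singleton]

lemma metricw_eq_of_windMultiset_eq (h : windMultiset γ v = {k, k, k + 1, k + 1}) :
    metricw γ v = k + 1 / 2 := by
  rw [metricw_eq_sum_windMultiset, h]
  simp only [Multiset.insert_eq_cons, Multiset.sum_cons, Multiset.sum_singleton]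
  push_cast
  ring

lemma topw_eq_of_windMultiset_eq (h : windMultiset γ v = {k, k, k + 1, k + 1}) :
    topw γ v = k + 1 / 2 := by
  have hne : k ≠ k + 1 := by omega
  have hset : windSet γ v = {k, k + 1} := by
    rw [windSet_eq_toFinset_windMultiset, h]
    simp
  rw [topw, hset, Finset.sum_pair hne, Finset.card_pair hne]
  push_cast
  ring

end Weights

namespace LatticeCycle

variable (γ : LatticeCycle) {i : ℕ}

lemma v_prev_eq_of_straight
    (hstraight : γ.v (i + 1) - γ.v i = γ.v (i + γ.n) - γ.v (i + γ.n - 1)) :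
    γ.v (i + γ.n - 1) = γ.v i - (γ.v (i + 1) - γ.v i) := by
  rw [hstraight, γ.periodic, sub_sub_cancel]

lemma wind_corner_row_sub_of_straight {l : ℤ} (hl : l = -1 ∨ l = 1)
    (hstraight : γ.v (i + 1) - γ.v i = γ.v (i + γ.n) - γ.v (i + γ.n - 1)) :
    wind γ (corner (γ.v i) (-1) l) - wind γ (corner (γ.v i) 1 l) = (γ.v (i + 1) - γ.v i).2 := by
  rw [γ.wind_sub_wind_eq_crossDefect_add i _ _ 0
      fun u w hs hu hw => crossDefect_corner_row_eq_zero hl hs hu hw,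
    γ.v_prev_eq_of_straight hstraight]
  simpa only [add_sub_cancel] using crossDefect_corner_row_straight (v := γ.v i) hl (γ.step i)

lemma wind_corner_column_sub_of_straight
    (hstraight : γ.v (i + 1) - γ.v i = γ.v (i + γ.n) - γ.v (i + γ.n - 1)) :
    wind γ (corner (γ.v i) (-1) (-1)) - wind γ (corner (γ.v i) (-1) 1) =
      -(γ.v (i + 1) - γ.v i).1 := by
  rw [γ.wind_sub_wind_eq_crossDefect_add i _ _ (rowRay (γ.v i))
      fun u w hs hu hw => crossDefect_corner_column_eq_zero hs hu hw,
    γ.v_prev_eq_of_straight hstraight]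
  simpa only [add_sub_cancel] using crossDefect_corner_column_straight (v := γ.v i) (γ.step i)

end LatticeCycle

theorem weights_at_straight_vertex_general (γ : LatticeCycle) (v : ℤ × ℤ) (i : ℕ)
    (hvi : γ.v i = v)
    (hstraight : γ.v (i + 1) - γ.v i = γ.v (i + γ.n) - γ.v (i + γ.n - 1)) :
    ∃ k : ℤ,
      ({wind γ (corner v (-1) (-1)), wind γ (corner v (-1) 1),
        wind γ (corner v 1 (-1)), wind γ (corner v 1 1)} : Multiset ℤ) =
        ({k, k, k + 1, k + 1} : Multiset ℤ) ∧
      metricw γ v = (k : ℚ) + 1/2 ∧ topw γ v = (k : ℚ) + 1/2 ∧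
      topw γ v - metricw γ v = 0 := by
  subst hvi
  obtain ⟨k, hk⟩ := exists_multiset_eq_of_gridStep (γ.step i)
    (γ.wind_corner_row_sub_of_straight (Or.inl rfl) hstraight)
    (γ.wind_corner_row_sub_of_straight (Or.inr rfl) hstraight)
    (γ.wind_corner_column_sub_of_straight hstraight)
  have hmetric := metricw_eq_of_windMultiset_eq hk
  have htop := topw_eq_of_windMultiset_eq hk
  exact ⟨k, hk, hmetric, htop, by rw [htop, hmetric, sub_self]⟩

/-- At a vertex `v = vᵢ` of `γ` where `γ` goes straight
(`d_out = d_in`), there is `k ∈ ℤ` such that exactly two of the four points of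
`N_v` have winding number `k` and the other two have winding number `k+1`;
consequently `metricw(γ,v) = topw(γ,v) = k + 1/2` and
`topw(γ,v) - metricw(γ,v) = 0`. -/
theorem weights_at_straight_vertex (γ : LatticeCycle) (v : ℤ × ℤ) (i : ℕ)
    (hi : i < γ.n) (hvi : γ.v i = v)
    (hstraight : γ.v (i + 1) - γ.v i = γ.v (i + γ.n) - γ.v (i + γ.n - 1)) :
    ∃ k : ℤ,
      ({wind γ (corner v (-1) (-1)), wind γ (corner v (-1) 1),
        wind γ (corner v 1 (-1)), wind γ (corner v 1 1)} : Multiset ℤ) =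
        ({k, k, k + 1, k + 1} : Multiset ℤ) ∧
      metricw γ v = (k : ℚ) + 1/2 ∧ topw γ v = (k : ℚ) + 1/2 ∧
      topw γ v - metricw γ v = 0 :=
  weights_at_straight_vertex_general γ v i hvi hstraight
end

section
/- Let γ be an oriented simple lattice cycle and let v be a vertex of γ at which γ turns right, i.e. angle(γ,v) = −1/4. Then there exists k ∈ ℤ such that exactly three of the four points of N_v have winding number k+1 and the remaining one has winding number k; consequently topw(γ,v) = k + 1/2, metricw(γ,v) = k + 3/4, and topw(γ,v) − metricw(γ,v) = −1/4. -/
open scoped Classical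

/-!
Moving a point of `(ℤ + 1/2)²` across a unit lattice edge changes its winding number by the net
number of times `γ` runs along that edge. Of the four edges at a vertex `v` of a simple cycle,
only the incoming and the outgoing edge are traversed, once each. At a right turn they bound the
unit square at `v` lying to the right of both; its centre in `N_v` therefore has winding number one
less than the three other points of `N_v`, which all agree.
-/

namespace LatticeCycle

variable (γ : LatticeCycle)

lemma v_mod (a : ℕ) : γ.v (a % γ.n) = γ.v a :=
  Function.Periodic.map_mod_nat γ.periodic a

lemma v_congr {a b : ℕ} (h : a ≡ b [MOD γ.n]) : γ.v a = γ.v b := by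
  rw [← γ.v_mod a, ← γ.v_mod b, h]

lemma modEq_of_v_eq {a b : ℕ} (h : γ.v a = γ.v b) : a ≡ b [MOD γ.n] :=
  γ.inj _ _ (Nat.mod_lt _ γ.n_pos) (Nat.mod_lt _ γ.n_pos)
    ((γ.v_mod a).trans (h.trans (γ.v_mod b).symm))

end LatticeCycle

open Finset

noncomputable def traversals (γ : LatticeCycle) (a b : ℤ × ℤ) : ℕ :=
  #{j ∈ range γ.n | γ.v j = a ∧ γ.v (j + 1) = b}

noncomputable def edgeFlow (γ : LatticeCycle) (a b : ℤ × ℤ) : ℤ :=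
  traversals γ a b - traversals γ b a

lemma edgeFlow_swap (γ : LatticeCycle) (a b : ℤ × ℤ) : edgeFlow γ b a = -edgeFlow γ a b :=
  (neg_sub _ _).symm

lemma traversals_of_v_eq {γ : LatticeCycle} {i : ℕ} {a : ℤ × ℤ} (hi : γ.v i = a) (b : ℤ × ℤ) :
    traversals γ a b = if γ.v (i + 1) = b then 1 else 0 := by
  have hsucc : γ.v (i % γ.n + 1) = γ.v (i + 1) := γ.v_congr ((Nat.mod_modEq i γ.n).add_right 1)
  have hfilter : {j ∈ range γ.n | γ.v j = a ∧ γ.v (j + 1) = b} =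
      if γ.v (i + 1) = b then {i % γ.n} else ∅ := by
    ext j
    simp only [mem_filter, mem_range]
    constructor
    · rintro ⟨hj, hja, hjb⟩
      have hji : j = i % γ.n := (Nat.mod_eq_of_lt hj).symm.trans (γ.modEq_of_v_eq (hja.trans hi.symm))
      subst hji
      rw [if_pos (hsucc ▸ hjb), mem_singleton]
    · split_ifs with hb
      · rintro hj
        rw [mem_singleton.mp hj]
        exact ⟨Nat.mod_lt _ γ.n_pos, (γ.v_mod i).trans hi, hsucc.trans hb⟩
      · simp
  rw [traversals, hfilter]
  split_ifs <;> rfl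

lemma traversals_of_v_succ_eq {γ : LatticeCycle} {j : ℕ} {a : ℤ × ℤ} (hj : γ.v (j + 1) = a)
    (b : ℤ × ℤ) : traversals γ b a = if γ.v j = b then 1 else 0 := by
  have hfilter : {k ∈ range γ.n | γ.v k = b ∧ γ.v (k + 1) = a} =
      if γ.v j = b then {j % γ.n} else ∅ := by
    ext k
    simp only [mem_filter, mem_range]
    constructor
    · rintro ⟨hk, hkb, hka⟩
      have hkj : k = j % γ.n := (Nat.mod_eq_of_lt hk).symm.trans
        (Nat.ModEq.add_right_cancel' 1 (γ.modEq_of_v_eq (hka.trans hj.symm)))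
      subst hkj
      rw [if_pos ((γ.v_mod j).symm.trans hkb), mem_singleton]
    · split_ifs with hb
      · rintro hk
        rw [mem_singleton.mp hk]
        exact ⟨Nat.mod_lt _ γ.n_pos, (γ.v_mod j).trans hb,
          (γ.v_congr ((Nat.mod_modEq j γ.n).add_right 1)).trans hj⟩
      · simp
  rw [traversals, hfilter]
  split_ifs <;> rfl

lemma edgeFlow_of_vertex {γ : LatticeCycle} {i j : ℕ} {a : ℤ × ℤ} (hi : γ.v i = a)
    (hj : γ.v (j + 1) = a) (b : ℤ × ℤ) :
    edgeFlow γ a b = (if γ.v (i + 1) = b then 1 else 0) - (if γ.v j = b then 1 else 0) := by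
  rw [edgeFlow, traversals_of_v_eq hi, traversals_of_v_succ_eq hj]
  split_ifs <;> rfl

lemma cast_add_half_lt_cast_iff {x a : ℤ} : (x : ℝ) + 1 / 2 < a ↔ x < a := by
  constructor <;> intro h
  · exact_mod_cast (by linarith : (x : ℝ) < a)
  · have : (x : ℝ) + 1 ≤ a := by exact_mod_cast h
    linarith

lemma cast_le_cast_add_half_and_lt_iff {a x : ℤ} :
    (a : ℝ) ≤ x + 1 / 2 ∧ (x : ℝ) + 1 / 2 < a + 1 ↔ a = x := by
  rw [← not_lt, cast_add_half_lt_cast_iff, show (a : ℝ) + 1 = ((a + 1 : ℤ) : ℝ) by push_cast; rfl,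
    cast_add_half_lt_cast_iff]
  omega

noncomputable def faceCenter (c : ℤ × ℤ) : ℝ × ℝ := ((c.1 : ℝ) + 1 / 2, (c.2 : ℝ) + 1 / 2)

lemma vcross_faceCenter (u w : ℤ × ℤ) (x y : ℤ) :
    vcross u w (faceCenter (x, y)) =
      if w = (u.1, u.2 + 1) ∧ x < u.1 ∧ u.2 = y then 1
      else if u = (w.1, w.2 + 1) ∧ x < w.1 ∧ w.2 = y then -1 else 0 := by
  simp only [vcross, faceCenter, cast_add_half_lt_cast_iff, cast_le_cast_add_half_and_lt_iff]

lemma vcross_faceCenter_left_sub (u w : ℤ × ℤ) (x y : ℤ) :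
    vcross u w (faceCenter (x - 1, y)) - vcross u w (faceCenter (x, y)) =
      (if u = (x, y) ∧ w = (x, y + 1) then 1 else 0) -
        (if u = (x, y + 1) ∧ w = (x, y) then 1 else 0) := by
  obtain ⟨u1, u2⟩ := u
  obtain ⟨w1, w2⟩ := w
  simp only [vcross_faceCenter, Prod.mk.injEq]
  split_ifs <;> omega

lemma vcross_faceCenter_sub_below (u w : ℤ × ℤ) (x y : ℤ)
    (hstep : w - u = (1, 0) ∨ w - u = (-1, 0) ∨ w - u = (0, 1) ∨ w - u = (0, -1)) :
    vcross u w (faceCenter (x, y)) - vcross u w (faceCenter (x, y - 1)) =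
      (if u = (x, y) ∧ w = (x + 1, y) then 1 else 0) -
        (if u = (x + 1, y) ∧ w = (x, y) then 1 else 0) +
      ((if u.2 = y ∧ x < u.1 then 1 else 0) - (if w.2 = y ∧ x < w.1 then 1 else 0)) := by
  obtain ⟨u1, u2⟩ := u
  obtain ⟨w1, w2⟩ := w
  simp only [vcross_faceCenter, Prod.mk.injEq, Prod.mk_sub_mk] at hstep ⊢
  rcases hstep with h | h | h | h <;> split_ifs <;> omega

lemma wind_faceCenter_left (γ : LatticeCycle) (x y : ℤ) :
    wind γ (faceCenter (x - 1, y)) = wind γ (faceCenter (x, y)) + edgeFlow γ (x, y) (x, y + 1) := by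
  rw [← sub_eq_iff_eq_add', wind, wind, ← sum_sub_distrib, edgeFlow, traversals, traversals,
    natCast_card_filter, natCast_card_filter, ← sum_sub_distrib]
  exact sum_congr rfl fun j _ => vcross_faceCenter_left_sub _ _ x y

lemma wind_faceCenter_below (γ : LatticeCycle) (x y : ℤ) :
    wind γ (faceCenter (x, y)) = wind γ (faceCenter (x, y - 1)) + edgeFlow γ (x, y) (x + 1, y) := by
  -- Per edge, the difference is the crossing of the horizontal edge `(x, y) → (x + 1, y)` plus a
  -- term `φ (j) - φ (j + 1)` that telescopes around the closed cycle.
  set φ : ℕ → ℤ := fun m => if (γ.v m).2 = y ∧ x < (γ.v m).1 then 1 else 0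
  have htelescope : ∑ j ∈ range γ.n, (φ j - φ (j + 1)) = 0 := by
    have hwrap : γ.v γ.n = γ.v 0 := by simpa using γ.periodic 0
    simp only [sum_range_sub', φ, hwrap, sub_self]
  rw [← sub_eq_iff_eq_add']
  calc wind γ (faceCenter (x, y)) - wind γ (faceCenter (x, y - 1))
      = ∑ j ∈ range γ.n, (((if γ.v j = (x, y) ∧ γ.v (j + 1) = (x + 1, y) then 1 else 0) -
          (if γ.v j = (x + 1, y) ∧ γ.v (j + 1) = (x, y) then 1 else 0)) + (φ j - φ (j + 1))) := by
        rw [wind, wind, ← sum_sub_distrib]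
        exact sum_congr rfl fun j _ => vcross_faceCenter_sub_below _ _ x y (γ.step j)
    _ = edgeFlow γ (x, y) (x + 1, y) := by
        rw [sum_add_distrib, htelescope, add_zero, sum_sub_distrib, edgeFlow, traversals,
          traversals, natCast_card_filter, natCast_card_filter]

lemma exists_multiset_eq_of_odd_one_out {a b c d : ℤ}
    (h : (b = a + 1 ∧ c = a + 1 ∧ d = a + 1) ∨ (a = b + 1 ∧ c = b + 1 ∧ d = b + 1) ∨
      (a = c + 1 ∧ b = c + 1 ∧ d = c + 1) ∨ (a = d + 1 ∧ b = d + 1 ∧ c = d + 1)) :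
    ∃ k : ℤ, ({a, b, c, d} : Multiset ℤ) = {k, k + 1, k + 1, k + 1} := by
  rcases h with ⟨rfl, rfl, rfl⟩ | ⟨rfl, rfl, rfl⟩ | ⟨rfl, rfl, rfl⟩ | ⟨rfl, rfl, rfl⟩
  exacts [⟨a, rfl⟩, ⟨b, by simp only [Multiset.insert_eq_cons, ← Multiset.singleton_add]; ac_rfl⟩,
    ⟨c, by simp only [Multiset.insert_eq_cons, ← Multiset.singleton_add]; ac_rfl⟩,
    ⟨d, by simp only [Multiset.insert_eq_cons, ← Multiset.singleton_add]; ac_rfl⟩]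

lemma corner_eq_faceCenter (x y : ℤ) :
    corner (x, y) (-1) (-1) = faceCenter (x - 1, y - 1) ∧
      corner (x, y) (-1) 1 = faceCenter (x - 1, y) ∧
      corner (x, y) 1 (-1) = faceCenter (x, y - 1) ∧ corner (x, y) 1 1 = faceCenter (x, y) := by
  refine ⟨?_, ?_, ?_, ?_⟩ <;>
    simp only [corner, faceCenter, Prod.mk.injEq] <;> push_cast <;> constructor <;> ring

lemma exists_corner_winds_eq_of_right_turn {γ : LatticeCycle} {i j : ℕ} {v : ℤ × ℤ}
    (hi : γ.v i = v) (hj : γ.v (j + 1) = v)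
    (hturn : γ.v (i + 1) - v = ((v - γ.v j).2, -(v - γ.v j).1)) :
    ∃ k : ℤ, ({wind γ (corner v (-1) (-1)), wind γ (corner v (-1) 1),
      wind γ (corner v 1 (-1)), wind γ (corner v 1 1)} : Multiset ℤ) = {k, k + 1, k + 1, k + 1} := by
  obtain ⟨x, y⟩ := v
  obtain ⟨hSW, hNW, hSE, hNE⟩ := corner_eq_faceCenter x y
  have hflow := edgeFlow_of_vertex hi hj
  have hW := And.intro (wind_faceCenter_left γ x y) <| And.intro (wind_faceCenter_left γ x (y - 1)) <|
    And.intro (wind_faceCenter_below γ x y) (wind_faceCenter_below γ (x - 1) y)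
  simp only [sub_add_cancel, edgeFlow_swap γ (x, y), hflow] at hW
  have hstep := γ.step j
  rw [hj] at hstep
  rw [sub_eq_iff_eq_add'] at hturn
  rw [hSW, hNW, hSE, hNE]
  apply exists_multiset_eq_of_odd_one_out
  have hin : γ.v j = (x, y) - ((x, y) - γ.v j) := (sub_sub_cancel _ _).symm
  rcases hstep with h | h | h | h <;>
  · rw [h] at hin hturn
    simp only [hturn, hin, Prod.mk_add_mk, Prod.mk_sub_mk, Prod.mk.injEq, Int.reduceNeg, neg_neg,
      neg_zero, add_zero, sub_zero, zero_sub, sub_neg_eq_add, add_right_inj, add_eq_left,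
      left_eq_add, sub_eq_self, sub_self, neg_eq_zero, one_ne_zero, reduceCtorEq, and_self,
      and_true, true_and, and_false, false_and, reduceIte] at hW
    omega

lemma topw_metricw_of_corner_winds_eq {γ : LatticeCycle} {v : ℤ × ℤ} {k : ℤ}
    (h : ({wind γ (corner v (-1) (-1)), wind γ (corner v (-1) 1),
      wind γ (corner v 1 (-1)), wind γ (corner v 1 1)} : Multiset ℤ) = {k, k + 1, k + 1, k + 1}) :
    topw γ v = k + 1 / 2 ∧ metricw γ v = k + 3 / 4 := by
  have hset : windSet γ v = {k, k + 1} := by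
    simpa [windSet] using congrArg Multiset.toFinset h
  have hsum := congrArg Multiset.sum h
  simp only [Multiset.insert_eq_cons, Multiset.sum_cons, Multiset.sum_singleton] at hsum
  constructor
  · rw [topw, hset, sum_pair (by omega), card_pair (by omega)]
    push_cast
    ring
  · rw [metricw, show wind γ (corner v (-1) (-1)) + wind γ (corner v (-1) 1) +
        wind γ (corner v 1 (-1)) + wind γ (corner v 1 1) = 4 * k + 3 by linarith]
    push_cast
    ring

theorem weights_at_right_turn_vertex_general (γ : LatticeCycle) (v : ℤ × ℤ) (i : ℕ)
    (hvi : γ.v i = v)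
    (hright : γ.v (i + 1) - γ.v i =
      ((γ.v (i + γ.n) - γ.v (i + γ.n - 1)).2, -(γ.v (i + γ.n) - γ.v (i + γ.n - 1)).1)) :
    ∃ k : ℤ,
      ({wind γ (corner v (-1) (-1)), wind γ (corner v (-1) 1),
        wind γ (corner v 1 (-1)), wind γ (corner v 1 1)} : Multiset ℤ) =
        ({k, k + 1, k + 1, k + 1} : Multiset ℤ) ∧
      topw γ v = (k : ℚ) + 1/2 ∧ metricw γ v = (k : ℚ) + 3/4 ∧
      topw γ v - metricw γ v = -(1/4) := by
  have hprev : γ.v (i + γ.n - 1 + 1) = v := by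
    rw [Nat.sub_add_cancel (by linarith [γ.n_pos]), γ.periodic, hvi]
  rw [γ.periodic, hvi] at hright
  obtain ⟨k, hk⟩ := exists_corner_winds_eq_of_right_turn hvi hprev hright
  obtain ⟨htop, hmetric⟩ := topw_metricw_of_corner_winds_eq hk
  exact ⟨k, hk, htop, hmetric, by rw [htop, hmetric]; ring⟩

/-- At a vertex `v = vᵢ` of `γ` where `γ` turns right
(`d_out` is `d_in` rotated by 90° clockwise), there is `k ∈ ℤ` such that exactly
three of the four points of `N_v` have winding number `k+1` and the remaining
one has winding number `k`; consequently `topw(γ,v) = k + 1/2`,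
`metricw(γ,v) = k + 3/4` and `topw(γ,v) - metricw(γ,v) = -1/4`. -/
theorem weights_at_right_turn_vertex (γ : LatticeCycle) (v : ℤ × ℤ) (i : ℕ)
    (hi : i < γ.n) (hvi : γ.v i = v)
    (hright : γ.v (i + 1) - γ.v i =
      ((γ.v (i + γ.n) - γ.v (i + γ.n - 1)).2, -(γ.v (i + γ.n) - γ.v (i + γ.n - 1)).1)) :
    ∃ k : ℤ,
      ({wind γ (corner v (-1) (-1)), wind γ (corner v (-1) 1),
        wind γ (corner v 1 (-1)), wind γ (corner v 1 1)} : Multiset ℤ) =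
        ({k, k + 1, k + 1, k + 1} : Multiset ℤ) ∧
      topw γ v = (k : ℚ) + 1/2 ∧ metricw γ v = (k : ℚ) + 3/4 ∧
      topw γ v - metricw γ v = -(1/4) :=
  weights_at_right_turn_vertex_general γ v i hvi hright
end

section
/- (Lemma 3.2 of the paper.) Let γ be an oriented simple lattice cycle. Then Σ_{v ∈ ℤ²} col(v)·metricw(γ,v) = 0, where the sum has only finitely many nonzero terms. -/
open scoped Classical

/-!
Let `W u` be a quarter of the winding number at `u + (1/2, 1/2)`. Then `metricw γ v` is the sum
of `W (v - d)` over `d ∈ {0,1}²`, and since `col (u + d) = -(col u * col d)`, reindexing gives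
`Σ_v col v * metricw γ v = -(Σ_d col d) * Σ_u col u * W u`,
where `Σ_d col d = -1 + 1 + 1 - 1 = 0`.
The sums are finite because `W` vanishes outside the bounding box of `γ`: to the right of it,
above or below it no vertical edge meets the ray, and to the left of it the crossings telescope
along the closed cycle.
-/

open Function

lemma vcross_eq_sub_of_lt_fst {u w : ℤ × ℤ} {p : ℝ × ℝ}
    (huw : w - u = (1, 0) ∨ w - u = (-1, 0) ∨ w - u = (0, 1) ∨ w - u = (0, -1))
    (hu : p.1 < u.1) (hw : p.1 < w.1) :
    vcross u w p = (if p.2 < w.2 then 1 else 0) - (if p.2 < u.2 then 1 else 0) := by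
  have hlt : ∀ m : ℤ, p.2 < m ↔ ⌊p.2⌋ < m := fun m => Int.floor_lt.symm
  have hle : ∀ m : ℤ, (m : ℝ) ≤ p.2 ↔ m ≤ ⌊p.2⌋ := fun m => Int.le_floor.symm
  have hlt1 : ∀ m : ℤ, p.2 < m + 1 ↔ ⌊p.2⌋ < m + 1 := fun m => by exact_mod_cast hlt (m + 1)
  simp only [vcross, hu, hw, hlt, hle, hlt1, true_and, Prod.ext_iff]
  rcases huw with h | h | h | h <;> simp only [Prod.ext_iff, Prod.fst_sub, Prod.snd_sub] at h <;>
    split_ifs <;> omega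

namespace LatticeCycle

variable (γ : LatticeCycle)

lemma finite_range_v : (Set.range γ.v).Finite := by
  refine ((Set.finite_Iio γ.n).image γ.v).subset ?_
  rintro _ ⟨i, rfl⟩
  exact ⟨i % γ.n, Nat.mod_lt _ (by linarith [γ.four_le]), Periodic.map_mod_nat γ.periodic i⟩

lemma wind_eq_zero_of_lt_fst {p : ℝ × ℝ} (h : ∀ i, p.1 < (γ.v i).1) : wind γ p = 0 := by
  rw [wind, Finset.sum_congr rfl fun i _ => vcross_eq_sub_of_lt_fst (γ.step i) (h i) (h (i + 1)),
    Finset.sum_range_sub (fun i => if p.2 < (γ.v i).2 then (1 : ℤ) else 0), sub_eq_zero]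
  simpa using congrArg (fun x : ℤ × ℤ => if p.2 < x.2 then (1 : ℤ) else 0) (γ.periodic 0)

lemma exists_v_of_wind_ne_zero {p : ℝ × ℝ} (h : wind γ p ≠ 0) :
    ∃ i, p.1 < (γ.v i).1 ∧ (γ.v i).2 ≤ p.2 ∧ p.2 < (γ.v i).2 + 1 := by
  obtain ⟨i, -, hi⟩ := Finset.exists_ne_zero_of_sum_ne_zero h
  unfold vcross at hi
  split_ifs at hi with hup hdown
  · exact ⟨i, hup.2⟩
  · exact ⟨i + 1, hdown.2⟩
  · exact absurd rfl hi

lemma finite_support_wind_corner : (support fun u => wind γ (corner u 1 1)).Finite := by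
  obtain ⟨L, hL⟩ := γ.finite_range_v.bddBelow
  obtain ⟨U, hU⟩ := γ.finite_range_v.bddAbove
  refine (Set.finite_Icc L U).subset fun u hu => ?_
  obtain ⟨i, hi₁, hi₂, hi₃⟩ := γ.exists_v_of_wind_ne_zero hu
  obtain ⟨j, hj⟩ : ∃ j, (γ.v j).1 ≤ u.1 := by
    by_contra! hlt
    exact hu (γ.wind_eq_zero_of_lt_fst fun j => by
      have : (u.1 : ℝ) + 1 ≤ (γ.v j).1 := by exact_mod_cast hlt j
      simp only [corner]; linarith)
  simp only [corner, Int.cast_one] at hi₁ hi₂ hi₃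
  have hx : u.1 < (γ.v i).1 := by exact_mod_cast (by linarith : (u.1 : ℝ) < (γ.v i).1)
  have hy : (γ.v i).2 = u.2 := by
    have h₁ : (γ.v i).2 < u.2 + 1 := by exact_mod_cast (by linarith : ((γ.v i).2 : ℝ) < u.2 + 1)
    have h₂ : u.2 < (γ.v i).2 + 1 := by exact_mod_cast (by linarith : (u.2 : ℝ) < (γ.v i).2 + 1)
    omega
  have hLj := hL ⟨j, rfl⟩
  have hLi := hL ⟨i, rfl⟩
  have hUi := hU ⟨i, rfl⟩
  exact ⟨⟨hLj.1.trans hj, hy ▸ hLi.2⟩, ⟨hx.le.trans hUi.1, hy ▸ hUi.2⟩⟩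

end LatticeCycle

lemma col_add (u w : ℤ × ℤ) : col (u + w) = -(col u * col w) := by
  simp only [col, Prod.fst_add, Prod.snd_add, Int.even_iff]
  split_ifs <;> omega

lemma finsum_col_mul_comp_sub {R : Type*} [CommRing R] [NoZeroDivisors R] (f : ℤ × ℤ → R)
    (d : ℤ × ℤ) : ∑ᶠ v, (col v : R) * f (v - d) = -(col d : R) * ∑ᶠ v, (col v : R) * f v := by
  rw [← finsum_comp_equiv (Equiv.addRight d), mul_finsum]
  refine finsum_congr fun u => ?_
  simp only [Equiv.coe_addRight, add_sub_cancel_right, col_add, Int.cast_neg, Int.cast_mul]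
  ring

lemma corner_sub (v d : ℤ × ℤ) (k l : ℤ) :
    corner (v - d) k l = corner v (k - 2 * d.1) (l - 2 * d.2) := by
  simp only [corner, Prod.fst_sub, Prod.snd_sub, Int.cast_sub, Int.cast_mul, Int.cast_ofNat,
    Prod.mk.injEq]
  constructor <;> ring

lemma metricw_eq_sum (γ : LatticeCycle) (v : ℤ × ℤ) :
    metricw γ v = ∑ d ∈ ({0, (1, 0), (0, 1), (1, 1)} : Finset (ℤ × ℤ)),
      (wind γ (corner (v - d) 1 1) : ℚ) / 4 := by
  rw [Finset.sum_insert (by decide), Finset.sum_insert (by decide), Finset.sum_pair (by decide)]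
  simp only [corner_sub]
  norm_num [metricw]
  ring

/-- Lemma 3.2: `Σ_{v ∈ ℤ²} col(v)·metricw(γ,v) = 0`, the sum
having only finitely many nonzero terms. -/
theorem sum_col_metricw_eq_zero (γ : LatticeCycle) :
    (Function.support (fun v : ℤ × ℤ => (col v : ℚ) * metricw γ v)).Finite ∧
    ∑ᶠ v : ℤ × ℤ, (col v : ℚ) * metricw γ v = 0 := by
  set D : Finset (ℤ × ℤ) := {0, (1, 0), (0, 1), (1, 1)}
  set W : ℤ × ℤ → ℚ := fun u => (wind γ (corner u 1 1) : ℚ) / 4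
  have hW : W.support.Finite :=
    γ.finite_support_wind_corner.subset fun u hu h => hu (by simp [W, h])
  have hterm : ∀ d, (support fun v => (col v : ℚ) * W (v - d)).Finite := fun d =>
    (hW.preimage sub_left_injective.injOn).subset (support_mul_subset_right _ _)
  have hsplit : (fun v => (col v : ℚ) * metricw γ v) =
      fun v => ∑ d ∈ D, (col v : ℚ) * W (v - d) := by
    funext v
    rw [metricw_eq_sum, Finset.mul_sum]
  rw [hsplit]
  refine ⟨(D.finite_toSet.biUnion fun d _ => hterm d).subset (Finset.support_sum _ _), ?_⟩
  rw [finsum_sum_comm _ _ fun d _ => hterm d]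
  have hcol : ∑ d ∈ D, (col d : ℚ) = 0 := by exact_mod_cast (by decide : ∑ d ∈ D, col d = 0)
  simp only [finsum_col_mul_comp_sub, ← Finset.sum_mul, Finset.sum_neg_distrib, hcol, neg_zero,
    zero_mul]
end
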